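/- arXiv:1006.5894 — 5 statements merged into one kernel-verified Lean document; each statement's English description precedes it below -/
import Mathlib

section
/- Let σ ∈ Sym(V) be linearly extendible via an injective map α : V → W = (F₂)^s. Then the extension σ' : W → W, defined by σ'(t) = ∑_j α(σ(v^j)) for t = ∑_j α(v^j) in the span T of α(V), and σ'(w) = σ'(w_T) + w_B for w = w_T + w_B with respect to a direct sum decomposition W = T ⊕ ⟨B⟩, is a well-defined invertible linear map on W. -/
/-!
Extendibility says exactly that the linear combinations `c ↦ ∑ c i • α i` and
`c ↦ ∑ c i • α (σ i)` have the same kernel, so both spans are the same quotient of the free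
module and `α v ↦ α (σ v)` is a well-defined isomorphism between them. In a finite-dimensional
space any isomorphism between subspaces extends to an automorphism, because complements of
subspaces of equal dimension are isomorphic.
-/

open Submodule Set

namespace Finsupp

theorem exists_linearEquiv_span_of_ker_linearCombination_eq {ι R M : Type*} [Ring R]
    [AddCommGroup M] [Module R M] {v w : ι → M}
    (h : LinearMap.ker (linearCombination R v) = LinearMap.ker (linearCombination R w)) :
    ∃ e : span R (range v) ≃ₗ[R] span R (range w),
      ∀ i, (e ⟨v i, subset_span (mem_range_self i)⟩ : M) = w i := by
  let e : span R (range v) ≃ₗ[R] span R (range w) :=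
    (LinearEquiv.ofEq _ _ (range_linearCombination R (v := v))).symm ≪≫ₗ
      (LinearMap.quotKerEquivRange _).symm ≪≫ₗ quotEquivOfEq _ _ h ≪≫ₗ
      LinearMap.quotKerEquivRange _ ≪≫ₗ LinearEquiv.ofEq _ _ (range_linearCombination R (v := w))
  refine ⟨e, fun i => ?_⟩
  have hv : (⟨v i, subset_span (mem_range_self i)⟩ : span R (range v)) =
      LinearEquiv.ofEq _ _ (range_linearCombination R (v := v))
        (LinearMap.quotKerEquivRange _ (Submodule.Quotient.mk (single i 1))) := by
    ext; simp
  rw [hv]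
  simp only [e, LinearEquiv.trans_apply, LinearEquiv.symm_apply_apply]
  simp

theorem linearCombination_zmod_two_apply {ι M : Type*} [AddCommMonoid M] [Module (ZMod 2) M]
    (v : ι → M) (c : ι →₀ ZMod 2) :
    linearCombination (ZMod 2) v c = (c.support.val.map v).sum := by
  rw [linearCombination_apply, Finsupp.sum]
  refine Finset.sum_congr rfl fun i hi => ?_
  have hci : c i = 1 := Fin.eq_one_of_ne_zero (c i) (mem_support_iff.mp hi)
  rw [hci, one_smul]

end Finsupp

theorem stmt_2_general (r s : ℕ)
    (σ : Equiv.Perm (Fin r → ZMod 2))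
    (α : (Fin r → ZMod 2) → (Fin s → ZMod 2))
    (hext : ∀ I : Multiset (Fin r → ZMod 2),
        (I.map α).sum = 0 ↔ (I.map fun v => α (σ v)).sum = 0) :
    ∃ A : (Fin s → ZMod 2) ≃ₗ[ZMod 2] (Fin s → ZMod 2),
      ∀ v, A (α v) = α (σ v) := by
  have hker : LinearMap.ker (Finsupp.linearCombination (ZMod 2) α) =
      LinearMap.ker (Finsupp.linearCombination (ZMod 2) (α ∘ σ)) := by
    ext c
    simp only [LinearMap.mem_ker, Finsupp.linearCombination_zmod_two_apply]
    exact hext _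
  obtain ⟨e, he⟩ := Finsupp.exists_linearEquiv_span_of_ker_linearCombination_eq hker
  obtain ⟨A, hA⟩ := Submodule.exists_linearEquiv_restrict_eq e
  exact ⟨A, fun v => (hA _).symm.trans (he v)⟩

theorem stmt_2 (r s : ℕ) (hs : s > r)
    (σ : Equiv.Perm (Fin r → ZMod 2))
    (α : (Fin r → ZMod 2) → (Fin s → ZMod 2)) (hα : Function.Injective α)
    (hext : ∀ I : Multiset (Fin r → ZMod 2),
        (I.map α).sum = 0 ↔ (I.map fun v => α (σ v)).sum = 0) :
    ∃ A : (Fin s → ZMod 2) ≃ₗ[ZMod 2] (Fin s → ZMod 2),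
      ∀ v, A (α v) = α (σ v) :=
  stmt_2_general r s σ α hext
end

section
/- Let ε' : F_{2^m} → (F₂)^{2^m} map field elements bijectively to standard basis vectors, and define ε : (F_{2^m})^b → ((F₂)^{2^m})^b by ε(v_1,…,v_b) = (ε'(v_1),…,ε'(v_b)). Then the F₂-dimension of the linear span of the image of ε equals 2^m·b − (b−1). -/
/-!
A tuple of unit vectors has all its row sums equal to `1`, so the span of such tuples lies in the
subspace of tuples whose row sums are all equal. Conversely, that subspace is spanned by them: the
difference of two unit-vector tuples that differ only in row `j` is `single j (eᵢ - eᵢ₀)`, and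
these, together with the constant tuple `(eᵢ₀, …, eᵢ₀)`, span every tuple with equal row sums.
The row-sum map onto `K^b` is surjective and the equal-row-sum condition is the preimage of the
line `K ∙ 1`, so the span has codimension `b - 1`.
-/

open Module Submodule

theorem sum_smul_single_sub_single {R ι : Type*} [Ring R] [Fintype ι] [DecidableEq ι]
    (u : ι → R) (i₀ : ι) :
    ∑ i, u i • (Pi.single i 1 - Pi.single i₀ 1 : ι → R) = u - (∑ i, u i) • Pi.single i₀ 1 := by
  simp only [smul_sub, Finset.sum_sub_distrib, Finset.sum_smul, ← Pi.single_smul', smul_eq_mul,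
    mul_one, Finset.univ_sum_single]

section UnitVectorTuples

variable (K β ι : Type*) [Field K]

def unitVectorTuples [DecidableEq ι] : Set (β → ι → K) :=
  Set.range fun f : β → ι => fun j => Pi.single (f j) 1

theorem mk_mem_unitVectorTuples [DecidableEq ι] (f : β → ι) :
    (fun j => Pi.single (f j) 1) ∈ unitVectorTuples K β ι :=
  ⟨f, rfl⟩

variable {K β ι}

theorem single_single_sub_single_mem_span [DecidableEq ι] [DecidableEq β] (j : β) (i i₀ : ι) :
    Pi.single j (Pi.single i 1 - Pi.single i₀ 1 : ι → K) ∈ span K (unitVectorTuples K β ι) := by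
  have hupdate : (fun k => Pi.single (Function.update (fun _ => i₀) j i k) 1 : β → ι → K) =
      (fun _ => Pi.single i₀ 1) + Pi.single j (Pi.single i 1 - Pi.single i₀ 1) := by
    ext k : 1
    by_cases hk : k = j <;> simp [hk]
  have hmem : _ - _ ∈ span K (unitVectorTuples K β ι) :=
    sub_mem (subset_span (mk_mem_unitVectorTuples K β ι (Function.update (fun _ => i₀) j i)))
      (subset_span (mk_mem_unitVectorTuples K β ι fun _ => i₀))
  rwa [hupdate, add_sub_cancel_left] at hmem

variable [Fintype ι]

variable (K β ι) in
def rowSums : (β → ι → K) →ₗ[K] β → K :=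
  LinearMap.compLeft (∑ i : ι, LinearMap.proj i) β

@[simp]
theorem rowSums_apply (x : β → ι → K) (j : β) : rowSums K β ι x j = ∑ i, x j i := by
  simp [rowSums, LinearMap.compLeft]

variable [DecidableEq ι]

theorem rowSums_surjective [Nonempty ι] : Function.Surjective (rowSums K β ι) := by
  intro y
  refine ⟨fun j => Pi.single (Classical.arbitrary ι) (y j), ?_⟩
  ext j
  simp

theorem single_mem_span_unitVectorTuples_of_sum_eq_zero [DecidableEq β] (j : β) {u : ι → K}
    (hu : ∑ i, u i = 0) (i₀ : ι) : Pi.single j u ∈ span K (unitVectorTuples K β ι) := by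
  have hu' : u = ∑ i, u i • (Pi.single i 1 - Pi.single i₀ 1 : ι → K) := by
    rw [sum_smul_single_sub_single, hu, zero_smul, sub_zero]
  rw [hu', ← LinearMap.coe_single K (fun _ : β => ι → K), map_sum]
  exact sum_mem fun i _ => by
    rw [LinearMap.map_smul]
    exact smul_mem _ _ (single_single_sub_single_mem_span j i i₀)

theorem mem_span_unitVectorTuples_of_rowSums_eq_zero [Fintype β] [Nonempty ι] {x : β → ι → K}
    (hx : rowSums K β ι x = 0) : x ∈ span K (unitVectorTuples K β ι) := by
  classical
  rw [← Finset.univ_sum_single x]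
  exact sum_mem fun j _ => single_mem_span_unitVectorTuples_of_sum_eq_zero j
    (by simpa using congrFun hx j) (Classical.arbitrary ι)

theorem span_unitVectorTuples [Fintype β] [Nonempty ι] :
    span K (unitVectorTuples K β ι) = (K ∙ (1 : β → K)).comap (rowSums K β ι) := by
  have hrowSums (f : β → ι) : rowSums K β ι (fun j => Pi.single (f j) 1) = 1 := by
    ext j
    simp
  apply le_antisymm
  · rw [span_le]
    rintro _ ⟨f, rfl⟩
    simp [hrowSums]
  · intro x hx
    obtain ⟨a, ha⟩ := mem_span_singleton.1 (mem_comap.1 hx)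
    let c : β → ι → K := fun _ => Pi.single (Classical.arbitrary ι) 1
    have hc : c ∈ span K (unitVectorTuples K β ι) := subset_span (mk_mem_unitVectorTuples K β ι _)
    have hdiff : rowSums K β ι (x - a • c) = 0 := by
      rw [map_sub, map_smul, hrowSums, ha, sub_self]
    simpa using add_mem (mem_span_unitVectorTuples_of_rowSums_eq_zero hdiff) (smul_mem _ a hc)

theorem finrank_span_unitVectorTuples [Fintype β] [Nonempty β] [Nonempty ι] :
    finrank K (span K (unitVectorTuples K β ι)) =
      Fintype.card ι * Fintype.card β - (Fintype.card β - 1) := by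
  let L : Submodule K (β → K) := K ∙ 1
  have hL : finrank K L = 1 := finrank_span_singleton one_ne_zero
  have hker : span K (unitVectorTuples K β ι) = LinearMap.ker (L.mkQ ∘ₗ rowSums K β ι) := by
    rw [LinearMap.ker_comp, ker_mkQ, span_unitVectorTuples]
  have hrange : LinearMap.range (L.mkQ ∘ₗ rowSums K β ι) = ⊤ :=
    LinearMap.range_eq_top.2 (L.mkQ_surjective.comp rowSums_surjective)
  have hnullity := LinearMap.finrank_range_add_finrank_ker (L.mkQ ∘ₗ rowSums K β ι)
  have hquot := L.finrank_quotient_add_finrank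
  rw [hrange, finrank_top] at hnullity
  rw [hker]
  simp only [finrank_pi_fintype, finrank_self, mul_one, Finset.sum_const, Finset.card_univ,
    smul_eq_mul, hL] at hnullity hquot
  have hβ : 0 < Fintype.card β := Fintype.card_pos
  rw [Nat.mul_comm]
  omega

end UnitVectorTuples

theorem stmt_5 (m b : ℕ) (hm : m ≠ 0) (hb : 2 ≤ b) [Fact (Nat.Prime 2)]
    (ε' : GaloisField 2 m → (Fin (2 ^ m) → ZMod 2))
    (hinj : Function.Injective ε')
    (hbasis : ∀ x, ∃ i : Fin (2 ^ m), ε' x = (Pi.single i 1 : Fin (2 ^ m) → ZMod 2)) :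
    Module.finrank (ZMod 2)
      (Submodule.span (ZMod 2)
        (Set.range (fun v : Fin b → GaloisField 2 m => fun j => ε' (v j))))
      = 2 ^ m * b - (b - 1) := by
  choose σ hσ using hbasis
  have hσ_inj : Function.Injective σ := fun x y hxy => hinj (by rw [hσ, hσ, hxy])
  have hσ_bij : Function.Bijective σ :=
    hσ_inj.bijective_of_nat_card_le (by simp [GaloisField.card 2 m hm])
  have hrange : Set.range (fun v : Fin b → GaloisField 2 m => fun j => ε' (v j)) =
      unitVectorTuples (ZMod 2) (Fin b) (Fin (2 ^ m)) := by
    simp_rw [hσ]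
    exact hσ_bij.2.comp_left.range_comp
      (fun (f : Fin b → Fin (2 ^ m)) j => (Pi.single (f j) 1 : Fin (2 ^ m) → ZMod 2))
  have : Nonempty (Fin b) := ⟨⟨0, by omega⟩⟩
  rw [hrange, finrank_span_unitVectorTuples, Fintype.card_fin, Fintype.card_fin]
end

section
/- Let M ∈ GL((F_{2^m})^b) have order t, and define α(v) = (ε(v), ε(Mv), …, ε(M^{t−1}v)) with ε the parallel basis-vector embedding into (F₂)^{2^m b}. Then dim_{F₂}(span of Im(α)) ≤ 2^m b t − (bt−1) − mb(t−1). -/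
/-!
Decoding each one-hot block, `f ↦ ∑ x, f x • (1, e⁻¹ x)`, is an `𝔽₂`-linear surjection `Φ` from
`(𝔽₂)^(2^m b t)` onto `(𝔽₂ × 𝔽_{2^m})^(b t)`, and it sends `α v` to `(j, i) ↦ (1, (M^j v) i)`.
These values lie in the image of the `𝔽₂`-linear map `(c, v) ↦ ((j, i) ↦ (c, (M^j v) i))`, of
dimension at most `1 + m b`. So the span of `Im α` lies in the preimage under `Φ` of a subspace
of codimension at least `b t (1 + m) - (1 + m b) = (b t - 1) + m b (t - 1)`.
-/

open Module Submodule Function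

theorem Submodule.finrank_comap_add_finrank_of_surjective {F V W : Type*} [Field F]
    [AddCommGroup V] [Module F V] [FiniteDimensional F V] [AddCommGroup W] [Module F W]
    {f : V →ₗ[F] W} (hf : Surjective f) (R : Submodule F W) :
    finrank F (R.comap f) + finrank F W = finrank F V + finrank F R := by
  have : FiniteDimensional F W := Module.Finite.of_surjective f hf
  have hsurj : Surjective (R.mkQ ∘ₗ f) := R.mkQ_surjective.comp hf
  have hker : LinearMap.ker (R.mkQ ∘ₗ f) = R.comap f := by
    rw [LinearMap.ker_comp, ker_mkQ]
  have hrank := (R.mkQ ∘ₗ f).finrank_range_add_finrank_ker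
  rw [LinearMap.range_eq_top.2 hsurj, finrank_top, hker] at hrank
  have := R.finrank_quotient_add_finrank
  omega

theorem Submodule.span_range_one_prod_eq_top (R K : Type*) [Ring R] [AddCommGroup K]
    [Module R K] : span R (Set.range fun y : K => ((1 : R), y)) = ⊤ := by
  refine eq_top_iff.2 fun ⟨c, y⟩ _ => ?_
  have hmem : ∀ y : K, ((1 : R), y) ∈ span R (Set.range fun y : K => ((1 : R), y)) :=
    fun y => subset_span ⟨y, rfl⟩
  have hcy : (c, y) = c • ((1 : R), (0 : K)) + (((1 : R), y) - ((1 : R), 0)) := by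
    ext <;> simp
  rw [hcy]
  exact add_mem (smul_mem _ _ (hmem 0)) (sub_mem (hmem y) (hmem 0))

section OneHot

variable (F : Type*) {K X : Type*} [Field F] [AddCommGroup K] [Module F K] [Fintype X]

-- Off the range of `e` the value `invFun e x` is junk, which is harmless: only the values on
-- `Pi.single (e y) 1` and surjectivity are used.
noncomputable def oneHotDecode (e : K → X) : (X → F) →ₗ[F] F × K :=
  Fintype.linearCombination F fun x => ((1 : F), invFun e x)

variable {F} {e : K → X}

theorem oneHotDecode_single [DecidableEq X] (he : Injective e) (y : K) :
    oneHotDecode F e (Pi.single (e y) 1) = (1, y) := by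
  simp [oneHotDecode, leftInverse_invFun he y]

theorem oneHotDecode_surjective (he : Injective e) : Surjective (oneHotDecode F e) := by
  classical
  rw [oneHotDecode, ← span_range_eq_top_iff_surjective_fintypeLinearCombination, eq_top_iff,
    ← Submodule.span_range_one_prod_eq_top F K]
  refine span_mono ?_
  rintro _ ⟨y, rfl⟩
  exact ⟨e y, by simp [leftInverse_invFun he y]⟩

end OneHot

theorem finrank_span_range_oneHot_le {F K X U J I : Type*} [Field F] [AddCommGroup K]
    [Module F K] [FiniteDimensional F K] [AddCommGroup U] [Module F U] [FiniteDimensional F U]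
    [Fintype X] [DecidableEq X] [Fintype J] [Fintype I]
    {e : K → X} (he : Injective e) (ℓ : J → I → U →ₗ[F] K) (α : U → J → I → X → F)
    (hα : ∀ u j i, α u j i = Pi.single (e (ℓ j i u)) 1) :
    finrank F (span F (Set.range α)) + Fintype.card J * (Fintype.card I * (1 + finrank F K))
      ≤ Fintype.card J * (Fintype.card I * Fintype.card X) + (1 + finrank F U) := by
  let Φ : (J → I → X → F) →ₗ[F] J → I → F × K :=
    LinearMap.piMap fun _ => LinearMap.piMap fun _ => oneHotDecode F e
  let G : F × U →ₗ[F] J → I → F × K :=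
    LinearMap.pi fun j => LinearMap.pi fun i => LinearMap.id.prodMap (ℓ j i)
  have hΦ : Surjective Φ :=
    Surjective.piMap fun _ => Surjective.piMap fun _ => oneHotDecode_surjective he
  have hspan : span F (Set.range α) ≤ (LinearMap.range G).comap Φ := by
    refine span_le.2 ?_
    rintro _ ⟨u, rfl⟩
    refine ⟨(1, u), ?_⟩
    ext j i : 2
    simp [Φ, G, hα, oneHotDecode_single he]
  have hG : finrank F (LinearMap.range G) ≤ 1 + finrank F U := by
    simpa using G.finrank_range_le
  have hV : finrank F (J → I → X → F) = Fintype.card J * (Fintype.card I * Fintype.card X) := by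
    simp [finrank_pi_fintype]
  have hT : finrank F (J → I → F × K) =
      Fintype.card J * (Fintype.card I * (1 + finrank F K)) := by
    simp [finrank_pi_fintype, finrank_prod]
  have := Submodule.finrank_comap_add_finrank_of_surjective hΦ (LinearMap.range G)
  have := Submodule.finrank_mono hspan
  omega

theorem stmt_14_general (m b t : ℕ) (hm : m ≠ 0) (hb : 2 ≤ b) [Fact (Nat.Prime 2)]
    (ε' : GaloisField 2 m → (Fin (2 ^ m) → ZMod 2))
    (hinj : Function.Injective ε')
    (hbasis : ∀ x, ∃ i : Fin (2 ^ m), ε' x = (Pi.single i 1 : Fin (2 ^ m) → ZMod 2))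
    (M : (Fin b → GaloisField 2 m) ≃ₗ[GaloisField 2 m] (Fin b → GaloisField 2 m))
    (ht0 : 0 < t)
    (α : (Fin b → GaloisField 2 m) → (Fin t → Fin b → Fin (2 ^ m) → ZMod 2))
    (hα : ∀ v j i, α v j i = ε' (((M ^ (j : ℕ)) v) i)) :
    Module.finrank (ZMod 2) (Submodule.span (ZMod 2) (Set.range α))
      ≤ 2 ^ m * b * t - (b * t - 1) - m * b * (t - 1) := by
  choose index hindex using hbasis
  have hindex_inj : Injective index := fun x y h => hinj (by rw [hindex, hindex, h])
  let ℓ (j : Fin t) (i : Fin b) : (Fin b → GaloisField 2 m) →ₗ[ZMod 2] GaloisField 2 m :=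
    ((LinearMap.proj i).comp (M ^ (j : ℕ)).toLinearMap).restrictScalars (ZMod 2)
  have key := finrank_span_range_oneHot_le hindex_inj ℓ α fun v j i => by rw [hα, hindex]; rfl
  simp only [Fintype.card_fin, finrank_pi_fintype, GaloisField.finrank 2 hm, Finset.sum_const,
    Finset.card_univ, smul_eq_mul] at key
  obtain ⟨s, rfl⟩ : ∃ s, t = s + 1 := ⟨t - 1, by omega⟩
  obtain ⟨c, rfl⟩ : ∃ c, b = c + 1 := ⟨b - 1, by omega⟩
  simp only [Nat.add_sub_cancel]
  ring_nf at key ⊢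
  omega

theorem stmt_14 (m b t : ℕ) (hm : m ≠ 0) (hb : 2 ≤ b) [Fact (Nat.Prime 2)]
    (ε' : GaloisField 2 m → (Fin (2 ^ m) → ZMod 2))
    (hinj : Function.Injective ε')
    (hbasis : ∀ x, ∃ i : Fin (2 ^ m), ε' x = (Pi.single i 1 : Fin (2 ^ m) → ZMod 2))
    (M : (Fin b → GaloisField 2 m) ≃ₗ[GaloisField 2 m] (Fin b → GaloisField 2 m))
    (ht : orderOf M = t) (ht0 : 0 < t)
    (α : (Fin b → GaloisField 2 m) → (Fin t → Fin b → Fin (2 ^ m) → ZMod 2))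
    (hα : ∀ v j i, α v j i = ε' (((M ^ (j : ℕ)) v) i)) :
    Module.finrank (ZMod 2) (Submodule.span (ZMod 2) (Set.range α))
      ≤ 2 ^ m * b * t - (b * t - 1) - m * b * (t - 1) :=
  stmt_14_general m b t hm hb ε' hinj hbasis M ht0 α hα
end

section
/- Let M ∈ GL((F_{2^m})^b), t its order, and α(v) = (ε(v), ε(Mv), …, ε(M^{t−1}v)). Any map σ(v) = (a·v_1 + c, …, a·v_b + c), with a ∈ F_{2^m} nonzero and c ∈ F_{2^m}, is linearly extendible via α: ∑ α(v^i) = 0 implies ∑ α(σ(v^i)) = 0 for every finite family {v^i}. -/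
/-!
Fix a block `j` and a coordinate `i`. Since `M ^ j` is linear, the `i`-th coordinate of
`M ^ j (σ v)` is `g ((M ^ j v) i)` for the affine bijection `g x = a * x + (M ^ j c) i` of the
field. As `ε'` sends field elements injectively to standard basis vectors, precomposing it with a
bijection only permutes the coordinates that some `ε' x` hits and leaves the others zero, so the
vanishing of the sums of the `(j, i)`-blocks survives replacing `v` by `σ v`.
-/

section OneHot

variable {K ι R : Type*} [DecidableEq ι] [AddCommMonoidWithOne R] {ε : K → ι → R}

theorem apply_comp_equiv_eq_zero_or_exists (hinj : Function.Injective ε)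
    (hbasis : ∀ x, ∃ i, ε x = Pi.single i 1) (g : K ≃ K) (k : ι) :
    (∀ x, ε (g x) k = 0) ∨ ∃ k', ∀ x, ε (g x) k = ε x k' := by
  choose idx hidx using hbasis
  have idx_inj : Function.Injective idx := fun x y h => hinj (by rw [hidx, hidx, h])
  by_cases hk : ∃ y, idx y = k
  · obtain ⟨y, rfl⟩ := hk
    refine Or.inr ⟨idx (g.symm y), fun x => ?_⟩
    rw [hidx, hidx, Pi.single_apply, Pi.single_apply]
    exact if_congr (by rw [idx_inj.eq_iff, idx_inj.eq_iff, g.symm_apply_eq]) rfl rfl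
  · exact Or.inl fun x => by rw [hidx, Pi.single_eq_of_ne' fun h => hk ⟨_, h⟩]

theorem Multiset.sum_map_comp_equiv_eq_zero (hinj : Function.Injective ε)
    (hbasis : ∀ x, ∃ i, ε x = Pi.single i 1) (g : K ≃ K) {s : Multiset K}
    (hs : (s.map ε).sum = 0) : (s.map fun x => ε (g x)).sum = 0 := by
  funext k
  rw [Pi.multiset_sum_apply, Multiset.map_map]
  rcases apply_comp_equiv_eq_zero_or_exists hinj hbasis g k with hzero | ⟨k', hk'⟩
  · simp [hzero]
  · simpa [Function.comp_def, hk', Pi.multiset_sum_apply] using congrFun hs k'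

end OneHot

theorem stmt_16_general (m b t : ℕ)
    (ε' : GaloisField 2 m → (Fin (2 ^ m) → ZMod 2))
    (hinj : Function.Injective ε')
    (hbasis : ∀ x, ∃ i : Fin (2 ^ m), ε' x = (Pi.single i 1 : Fin (2 ^ m) → ZMod 2))
    (M : (Fin b → GaloisField 2 m) ≃ₗ[GaloisField 2 m] (Fin b → GaloisField 2 m))
    (α : (Fin b → GaloisField 2 m) → (Fin t → Fin b → Fin (2 ^ m) → ZMod 2))
    (hα : ∀ v j i, α v j i = ε' (((M ^ (j : ℕ)) v) i))
    (a c : GaloisField 2 m) (ha : a ≠ 0)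
    (I : Multiset (Fin b → GaloisField 2 m))
    (hsum : (I.map α).sum = 0) :
    (I.map fun v => α (fun j => a * v j + c)).sum = 0 := by
  funext j i
  let g := (Equiv.mulLeft₀ a ha).trans (Equiv.addRight ((M ^ (j : ℕ)) (fun _ => c) i))
  have hσ : ∀ v, α (fun l => a * v l + c) j i = ε' (g ((M ^ (j : ℕ)) v i)) := fun v => by
    have hv : (fun l => a * v l + c) = a • v + fun _ => c := rfl
    ext k
    rw [hα, hv, map_add, map_smul]
    rfl
  have hblock : (I.map fun v => ε' ((M ^ (j : ℕ)) v i)).sum = 0 := by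
    simpa [Pi.multiset_sum_apply, Multiset.map_map, Function.comp_def, hα]
      using congrFun (congrFun hsum j) i
  have hσblock := Multiset.sum_map_comp_equiv_eq_zero hinj hbasis g
    (s := I.map fun v => (M ^ (j : ℕ)) v i) (by rwa [Multiset.map_map])
  simpa [Pi.multiset_sum_apply, Multiset.map_map, Function.comp_def, hσ] using hσblock

theorem stmt_16 (m b t : ℕ) (hm : m ≠ 0) (hb : 2 ≤ b) [Fact (Nat.Prime 2)]
    (ε' : GaloisField 2 m → (Fin (2 ^ m) → ZMod 2))
    (hinj : Function.Injective ε')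
    (hbasis : ∀ x, ∃ i : Fin (2 ^ m), ε' x = (Pi.single i 1 : Fin (2 ^ m) → ZMod 2))
    (M : (Fin b → GaloisField 2 m) ≃ₗ[GaloisField 2 m] (Fin b → GaloisField 2 m))
    (ht : orderOf M = t) (ht0 : 0 < t)
    (α : (Fin b → GaloisField 2 m) → (Fin t → Fin b → Fin (2 ^ m) → ZMod 2))
    (hα : ∀ v j i, α v j i = ε' (((M ^ (j : ℕ)) v) i))
    (a c : GaloisField 2 m) (ha : a ≠ 0)
    (I : Multiset (Fin b → GaloisField 2 m))
    (hsum : (I.map α).sum = 0) :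
    (I.map fun v => α (fun j => a * v j + c)).sum = 0 :=
  stmt_16_general m b t ε' hinj hbasis M α hα a c ha I hsum
end

section
/- Let σ ∈ GL((F₂)^N) with N ≥ 4 and suppose the order of σ is even. Then the order of σ is at most 2(2^{N−2} − 1) = 2^{N−1} − 2. -/
/-!
Let `μ` be the minimal polynomial of `σ`: then `deg μ ≤ N`, and `ord σ` is the order
`n = 2^(b+1) m` (`m` odd) of `X` modulo `μ`. In characteristic 2,
`X^n - 1 = (X^m - 1)^(2^(b+1))`, while `μ ∤ (X^m - 1)^(2^b)`; hence some irreducible `p`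
divides `μ` with multiplicity greater than `2^b`, say `μ = p^(2^b+1) g`. Every irreducible
`q ≠ X` of degree `d` divides `X^(2^d-1) - 1`, so every prime factor of `μ` divides
`X^((2^(deg p) - 1) t) - 1` for some `t ≤ 2^(deg g)`, and the odd number `m` divides
`(2^(deg p) - 1) t`. The degree count `(2^b+1) deg p + deg g ≤ N` then forces `n < 2^(N-1)`.
-/

open Polynomial

theorem dvd_pow_of_dvd_pow_of_forall_prime_pow_succ_not_dvd {α : Type*}
    [CommMonoidWithZero α] [UniqueFactorizationMonoid α] {f s : α} {k A : ℕ}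
    (hf : f ≠ 0) (hfs : f ∣ s ^ k) (hA : ∀ p, Prime p → ¬ p ^ (A + 1) ∣ f) : f ∣ s ^ A := by
  induction f using UniqueFactorizationMonoid.induction_on_coprime with
  | h0 => exact absurd rfl hf
  | h1 hu => exact hu.dvd
  | @hpr p i hp =>
    have hiA : i ≤ A := by
      by_contra! h
      exact hA p hp (pow_dvd_pow p h)
    rcases Nat.eq_zero_or_pos i with rfl | hi
    · simp
    have hps : p ∣ s := hp.dvd_of_dvd_pow ((dvd_pow_self p hi.ne').trans hfs)
    exact (pow_dvd_pow_of_dvd hps i).trans (pow_dvd_pow s hiA)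
  | @hcp x y hxy ihx ihy =>
    refine hxy.mul_dvd (ihx (left_ne_zero_of_mul hf) ((dvd_mul_right x y).trans hfs) ?_)
      (ihy (right_ne_zero_of_mul hf) ((dvd_mul_left y x).trans hfs) ?_)
    · exact fun p hp h => hA p hp (h.mul_right y)
    · exact fun p hp h => hA p hp (h.mul_left x)

theorem mul_dvd_pow_mul_sub_one_pow_add {R : Type*} [CommRing R] {f g x : R} {s t i j : ℕ}
    (hf : f ∣ (x ^ s - 1) ^ i) (hg : g ∣ (x ^ t - 1) ^ j) :
    f * g ∣ (x ^ (s * t) - 1) ^ (i + j) := by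
  rw [pow_add]
  refine mul_dvd_mul (hf.trans (pow_dvd_pow_of_dvd ?_ i)) (hg.trans (pow_dvd_pow_of_dvd ?_ j))
  · exact pow_one_sub_dvd_pow_mul_sub_one x s t
  · exact mul_comm s t ▸ pow_one_sub_dvd_pow_mul_sub_one x t s

theorem pow_sub_one_pow_expChar_pow {R : Type*} [CommRing R] (p : ℕ) [ExpChar R p] (x : R)
    (m n : ℕ) : (x ^ m - 1) ^ p ^ n = x ^ (m * p ^ n) - 1 := by
  rw [sub_pow_expChar_pow, one_pow, pow_mul]

theorem Polynomial.not_X_dvd_X_pow_sub_one {R : Type*} [CommRing R] [Nontrivial R] {n : ℕ}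
    (hn : n ≠ 0) : ¬ (X : R[X]) ∣ X ^ n - 1 := by
  simp [X_dvd_iff, Ne.symm hn]

theorem Irreducible.dvd_X_pow_card_pow_natDegree_sub_one {K : Type*} [Field K] [Finite K]
    {f : K[X]} (hf : Irreducible f) (hX : ¬ X ∣ f) :
    f ∣ X ^ (Nat.card K ^ f.natDegree - 1) - 1 := by
  have h := hf.natDegree_dvd_iff_dvd_X_pow_card_pow_sub_X.1 (dvd_refl f.natDegree)
  obtain ⟨r, hr⟩ := Nat.exists_eq_add_one.2 (pow_pos (Nat.card_pos (α := K)) f.natDegree)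
  rw [hr, pow_succ', ← mul_sub_one] at h
  rw [hr, Nat.add_sub_cancel]
  exact (irreducible_X.coprime_iff_not_dvd.2 hX).symm.dvd_of_dvd_mul_left h

theorem exists_dvd_X_pow_sub_one_pow {K : Type*} [Field K] [Finite K] {g : K[X]}
    (hg : g ≠ 0) (hX : ¬ X ∣ g) :
    ∃ t, 0 < t ∧ t ≤ Nat.card K ^ g.natDegree ∧ ∃ k, g ∣ (X ^ t - 1) ^ k := by
  induction g using UniqueFactorizationMonoid.induction_on_prime with
  | h₁ => exact absurd rfl hg
  | h₂ u hu => exact ⟨1, one_pos, Nat.one_le_pow _ _ Nat.card_pos, 0, by simpa using hu.dvd⟩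
  | h₃ a p ha hp ih =>
    obtain ⟨t, ht, hta, k, hk⟩ := ih ha fun h => hX (h.mul_left p)
    have hpX : p ∣ (X ^ (Nat.card K ^ p.natDegree - 1) - 1) ^ 1 := by
      rw [pow_one]
      exact hp.irreducible.dvd_X_pow_card_pow_natDegree_sub_one fun h => hX (h.mul_right a)
    have hq : 1 < Nat.card K ^ p.natDegree :=
      Nat.one_lt_pow hp.irreducible.natDegree_pos.ne' Finite.one_lt_card
    refine ⟨_, Nat.mul_pos (by omega) ht, ?_, _, mul_dvd_pow_mul_sub_one_pow_add hpX hk⟩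
    rw [natDegree_mul hp.ne_zero ha, pow_add]
    exact Nat.mul_le_mul (Nat.sub_le _ _) hta

theorem exists_prime_pow_expChar_pow_succ_dvd {K : Type*} [Field K] (ℓ : ℕ) [ExpChar K ℓ]
    {μ : K[X]} {m b : ℕ} (hμ : μ ≠ 0) (hdvd : μ ∣ X ^ (m * ℓ ^ (b + 1)) - 1)
    (hndvd : ¬ μ ∣ X ^ (m * ℓ ^ b) - 1) : ∃ p, Prime p ∧ p ^ (ℓ ^ b + 1) ∣ μ := by
  rw [← pow_sub_one_pow_expChar_pow] at hdvd hndvd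
  by_contra! h
  exact hndvd (dvd_pow_of_dvd_pow_of_forall_prime_pow_succ_not_dvd hμ hdvd h)

theorem le_card_pow_sub_one_mul_card_pow {K : Type*} [Field K] [Finite K] (ℓ : ℕ)
    [CharP K ℓ] {p g : K[X]} {j n m : ℕ} (hμ : ∀ k, p ^ j * g ∣ X ^ k - 1 → n ∣ k)
    (hp : Prime p) (hpX : ¬ X ∣ p) (hg : g ≠ 0) (hgX : ¬ X ∣ g) (hm : m.Coprime ℓ)
    (hmn : m ∣ n) : m ≤ (Nat.card K ^ p.natDegree - 1) * Nat.card K ^ g.natDegree := by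
  have hℓ := CharP.char_is_prime K ℓ
  have := Fact.mk hℓ
  obtain ⟨t, ht, htg, k, hk⟩ := exists_dvd_X_pow_sub_one_pow hg hgX
  have hp1 : p ^ j ∣ (X ^ (Nat.card K ^ p.natDegree - 1) - 1) ^ j :=
    pow_dvd_pow_of_dvd (hp.irreducible.dvd_X_pow_card_pow_natDegree_sub_one hpX) j
  have hdvd := (mul_dvd_pow_mul_sub_one_pow_add hp1 hk).trans
    (pow_dvd_pow _ (Nat.lt_pow_self (n := j + k) hℓ.one_lt).le)
  rw [pow_sub_one_pow_expChar_pow] at hdvd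
  have hmt : m ∣ (Nat.card K ^ p.natDegree - 1) * t :=
    (Nat.Coprime.pow_right _ hm).dvd_of_dvd_mul_right (hmn.trans (hμ _ hdvd))
  have hq : 1 < Nat.card K ^ p.natDegree :=
    Nat.one_lt_pow hp.irreducible.natDegree_pos.ne' Finite.one_lt_card
  exact (Nat.le_of_dvd (Nat.mul_pos (by omega) ht) hmt).trans (Nat.mul_le_mul_left _ htg)

theorem two_pow_succ_mul_lt_two_pow {N b d e m : ℕ} (hN : 4 ≤ N) (hd : 0 < d)
    (hdeg : (2 ^ b + 1) * d + e ≤ N) (hm : Odd m) (hme : m ≤ (2 ^ d - 1) * 2 ^ e) :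
    2 ^ (b + 1) * m < 2 ^ (N - 1) := by
  suffices ∃ j, m < 2 ^ j ∧ b + j + 2 ≤ N by
    obtain ⟨j, hmj, hj⟩ := this
    calc 2 ^ (b + 1) * m < 2 ^ (b + 1) * 2 ^ j := by gcongr
      _ = 2 ^ (b + 1 + j) := (pow_add _ _ _).symm
      _ ≤ 2 ^ (N - 1) := Nat.pow_le_pow_right two_pos (by omega)
  have hb : b < 2 ^ b := Nat.lt_two_pow_self
  obtain rfl | hd : d = 1 ∨ 1 < d := by omega
  · rcases Nat.eq_zero_or_pos e with rfl | he
    · refine ⟨1, by simpa using hme, ?_⟩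
      rcases b with _ | b
      · omega
      · have := Nat.lt_two_pow_self (n := b)
        rw [pow_succ] at hdeg
        omega
    · have hme : m ≤ 2 ^ e := by simpa using hme
      have hne : m ≠ 2 ^ e := by
        rintro rfl
        exact Nat.not_even_iff_odd.2 hm (Nat.even_pow.2 ⟨even_two, he.ne'⟩)
      exact ⟨e, lt_of_le_of_ne hme hne, by omega⟩
  · refine ⟨d + e, ?_, by nlinarith⟩
    calc m ≤ (2 ^ d - 1) * 2 ^ e := hme
      _ < 2 ^ d * 2 ^ e := by gcongr; exact Nat.sub_lt (by positivity) one_pos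
      _ = 2 ^ (d + e) := (pow_add _ _ _).symm

theorem lt_two_pow_of_dvd_X_pow_sub_one_iff {μ : (ZMod 2)[X]} {n N : ℕ}
    (hμ : ∀ k, μ ∣ X ^ k - 1 ↔ n ∣ k) (hn : Even n) (hn0 : n ≠ 0) (hdeg : μ.natDegree ≤ N)
    (hN : 4 ≤ N) : n < 2 ^ (N - 1) := by
  obtain ⟨a, m, hm, rfl⟩ := Nat.exists_eq_two_pow_mul_odd hn0
  obtain ⟨b, rfl⟩ : ∃ b, a = b + 1 := Nat.exists_eq_add_one.2 <| Nat.pos_of_ne_zero fun ha =>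
    Nat.not_even_iff_odd.2 hm (by simpa [ha] using hn)
  have hXμ : ¬ X ∣ μ := fun h => not_X_dvd_X_pow_sub_one hn0 (h.trans ((hμ _).2 dvd_rfl))
  have hμ0 : μ ≠ 0 := fun h => hXμ (h ▸ dvd_zero X)
  have hdvd : μ ∣ X ^ (m * 2 ^ (b + 1)) - 1 := (hμ _).2 (by rw [mul_comm])
  have hndvd : ¬ μ ∣ X ^ (m * 2 ^ b) - 1 := by
    rw [hμ, pow_succ, mul_comm m]
    exact Nat.not_dvd_of_pos_of_lt (Nat.mul_pos (Nat.two_pow_pos b) hm.pos)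
      (by nlinarith [hm.pos, Nat.two_pow_pos b])
  obtain ⟨p, hp, g, rfl⟩ := exists_prime_pow_expChar_pow_succ_dvd 2 hμ0 hdvd hndvd
  have hg : g ≠ 0 := right_ne_zero_of_mul hμ0
  have hpX : ¬ X ∣ p := fun h => hXμ ((h.trans (dvd_pow_self p (by positivity))).mul_right g)
  have hmle := le_card_pow_sub_one_mul_card_pow 2 (fun k => (hμ k).1) hp hpX hg
    (fun h => hXμ (h.mul_left _)) (Nat.coprime_two_right.2 hm) (Dvd.intro_left _ rfl)
  rw [Nat.card_zmod] at hmle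
  rw [natDegree_mul (pow_ne_zero _ hp.ne_zero) hg, natDegree_pow] at hdeg
  exact two_pow_succ_mul_lt_two_pow hN hp.irreducible.natDegree_pos hdeg hm hmle

theorem minpoly_dvd_X_pow_sub_one_iff {K A : Type*} [Field K] [Ring A] [Algebra K A] (a : A)
    (k : ℕ) : minpoly K a ∣ X ^ k - 1 ↔ orderOf a ∣ k := by
  rw [orderOf_dvd_iff_pow_eq_one, minpoly.dvd_iff, map_sub, map_pow, aeval_X, map_one,
    sub_eq_zero]

theorem LinearMap.natDegree_minpoly_le {K M : Type*} [Field K] [AddCommGroup M] [Module K M]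
    [FiniteDimensional K M] (f : Module.End K M) :
    (minpoly K f).natDegree ≤ Module.finrank K M :=
  (natDegree_le_of_dvd (minpoly_dvd_charpoly f) (charpoly_monic f).ne_zero).trans
    (charpoly_natDegree f).le

theorem stmt_19 (N : ℕ) (hN : 4 ≤ N)
    (σ : (Fin N → ZMod 2) ≃ₗ[ZMod 2] (Fin N → ZMod 2))
    (hσ : Even (orderOf σ)) :
    orderOf σ ≤ 2 * (2 ^ (N - 2) - 1) ∧
      2 * (2 ^ (N - 2) - 1) = 2 ^ (N - 1) - 2 := by
  have hpow : 2 ^ (N - 1) = 2 * 2 ^ (N - 2) := by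
    rw [← pow_succ']
    congr 1
    omega
  have := Nat.one_le_two_pow (n := N - 2)
  refine ⟨?_, by omega⟩
  have : Finite ((Fin N → ZMod 2) ≃ₗ[ZMod 2] (Fin N → ZMod 2)) :=
    Finite.of_injective _ DFunLike.coe_injective
  let φ : Module.End (ZMod 2) (Fin N → ZMod 2) := σ
  have hord : orderOf φ = orderOf σ :=
    orderOf_injective LinearEquiv.automorphismGroup.toLinearMapMonoidHom
      LinearEquiv.toLinearMap_injective σ
  have hlt : orderOf σ < 2 ^ (N - 1) := lt_two_pow_of_dvd_X_pow_sub_one_iff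
    (fun k => hord ▸ minpoly_dvd_X_pow_sub_one_iff φ k) hσ (orderOf_pos σ).ne'
    (by simpa using φ.natDegree_minpoly_le) hN
  obtain ⟨r, hr⟩ := hσ
  omega
end
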